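/- Every graph G satisfies pw(G) ≤ si(G)·ω(G) − 1, where pw is pathwidth and ω is the clique number. -/

import Mathlib

/-- `(a, b, L)` is a `d`-simultaneous interval representation of `G`:
each vertex `v` gets a nonempty open interval `(a v, b v)` and a label set
`L v ⊆ {1,…,d}`, and distinct vertices are adjacent iff both their intervals
and their label sets intersect. -/
def IsSIRep {V : Type*} (G : SimpleGraph V) (d : ℕ)
    (a b : V → ℝ) (L : V → Finset (Fin d)) : Prop :=
  (∀ v, a v < b v) ∧
  ∀ u v : V, u ≠ v →
    (G.Adj u v ↔ (Set.Ioo (a u) (b u) ∩ Set.Ioo (a v) (b v)).Nonempty ∧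
      (L u ∩ L v).Nonempty)

/-- The simultaneous interval number of `G`. -/
noncomputable def si {V : Type*} (G : SimpleGraph V) : ℕ :=
  sInf {d | ∃ a b L, IsSIRep G d a b L}

/-- A path decomposition of `G` with bags `X 0, …, X (p-1)`. -/
def IsPathDecomp {V : Type*} (G : SimpleGraph V) (p : ℕ) (X : Fin p → Finset V) : Prop :=
  (∀ v, ∃ i, v ∈ X i) ∧
  (∀ u v, G.Adj u v → ∃ i, u ∈ X i ∧ v ∈ X i) ∧
  (∀ v, ∀ i j l : Fin p, i ≤ j → j ≤ l → v ∈ X i → v ∈ X l → v ∈ X j)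

/-- `S` is an independent set in `G`. -/
def IsIndepSet {V : Type*} (G : SimpleGraph V) (S : Finset V) : Prop :=
  ∀ u ∈ S, ∀ v ∈ S, u ≠ v → ¬ G.Adj u v

/-- The path-independence number of `G`. -/
noncomputable def pathAlpha {V : Type*} (G : SimpleGraph V) : ℕ :=
  sInf {k | ∃ (p : ℕ) (X : Fin p → Finset V), IsPathDecomp G p X ∧
    ∀ (i : Fin p) (S : Finset V), S ⊆ X i → IsIndepSet G S → S.card ≤ k}

/-- The pathwidth of `G`. -/
noncomputable def pathwidth {V : Type*} (G : SimpleGraph V) : ℕ :=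
  sInf {w | ∃ (p : ℕ) (X : Fin p → Finset V), IsPathDecomp G p X ∧
    ∀ i, (X i).card ≤ w + 1}

/-- The clique number of `G`. -/
noncomputable def cliqueNumber {V : Type*} (G : SimpleGraph V) : ℕ :=
  sSup {n | ∃ s : Finset V, G.IsNClique n s}

/-!
Give every vertex the half-open interval `[a v, b v)` and sweep a point `x` from left to right,
stopping at the left endpoints: the sets of intervals containing `x` form a path decomposition.
Such a set splits into `d` cliques according to the labels, so it has at most `d · ω` vertices.
Vertices without labels are isolated; moving their intervals apart from all the others first
makes any bag that contains one of them a singleton.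
-/

open Finset

section

variable {V : Type*} [Fintype V]

noncomputable def stabSet (a b : V → ℝ) (x : ℝ) : Finset V :=
  univ.filter fun v => a v ≤ x ∧ x < b v

theorem mem_stabSet {a b : V → ℝ} {x : ℝ} {v : V} :
    v ∈ stabSet a b x ↔ a v ≤ x ∧ x < b v := by
  simp [stabSet]

theorem exists_isPathDecomp_stabSet (G : SimpleGraph V) (a b : V → ℝ) (hab : ∀ v, a v < b v)
    (hG : ∀ u v, G.Adj u v → a u < b v) :
    ∃ p X, IsPathDecomp G p X ∧ ∀ i, ∃ x, X i = stabSet a b x := by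
  let e := Fintype.equivFin V
  let σ : Fin (Fintype.card V) ≃ V := (Tuple.sort (a ∘ e.symm)).trans e.symm
  have hσ : Monotone (a ∘ σ) := Tuple.monotone_sort (a ∘ e.symm)
  refine ⟨_, fun i => stabSet a b (a (σ i)), ⟨fun v => ⟨σ.symm v, ?_⟩, ?_, ?_⟩,
    fun i => ⟨_, rfl⟩⟩
  · simp [mem_stabSet, hab]
  · intro u v huv
    wlog h : a u ≤ a v generalizing u v
    · obtain ⟨i, hv, hu⟩ := this v u huv.symm (le_of_not_ge h)
      exact ⟨i, hu, hv⟩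
    exact ⟨σ.symm v, by simp [mem_stabSet, h, hG v u huv.symm, hab]⟩
  · intro v i j l hij hjl hi hl
    rw [mem_stabSet] at *
    exact ⟨hi.1.trans (hσ hij), (hσ hjl).trans_lt hl.2⟩

theorem pathwidth_le_of_card_stabSet_le (G : SimpleGraph V) (a b : V → ℝ)
    (hab : ∀ v, a v < b v) (hG : ∀ u v, G.Adj u v → a u < b v) (w : ℕ)
    (hw : ∀ x, #(stabSet a b x) ≤ w + 1) : pathwidth G ≤ w := by
  obtain ⟨p, X, hX, hXstab⟩ := exists_isPathDecomp_stabSet G a b hab hG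
  refine Nat.sInf_le ⟨p, X, hX, fun i => ?_⟩
  obtain ⟨x, hx⟩ := hXstab i
  exact hx ▸ hw x

theorem card_le_cliqueNumber {G : SimpleGraph V} {s : Finset V} (hs : G.IsClique (s : Set V)) :
    #s ≤ cliqueNumber G :=
  le_csSup ⟨Fintype.card V, fun _ ⟨t, ht⟩ => ht.card_eq ▸ card_le_univ t⟩ ⟨s, hs, rfl⟩

end

namespace IsSIRep

variable {V : Type*} {G : SimpleGraph V} {d : ℕ} {a b : V → ℝ} {L : V → Finset (Fin d)}

theorem lt_of_adj (h : IsSIRep G d a b L) {u v : V} (huv : G.Adj u v) : a u < b v := by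
  obtain ⟨⟨x, hxu, hxv⟩, -⟩ := (h.2 u v huv.ne).1 huv
  exact hxu.1.trans hxv.2

variable [Fintype V]

theorem isClique_stabSet_filter_mem (h : IsSIRep G d a b L) (x : ℝ) (ℓ : Fin d) :
    G.IsClique ((stabSet a b x).filter (ℓ ∈ L ·) : Set V) := by
  intro u hu v hv huv
  simp only [coe_filter, mem_stabSet, Set.mem_ofPred_eq] at hu hv
  refine (h.2 u v huv).2 ⟨?_, ℓ, mem_inter.2 ⟨hu.2, hv.2⟩⟩
  rw [Set.Ioo_inter_Ioo, Set.nonempty_Ioo, max_lt_iff, lt_min_iff, lt_min_iff]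
  exact ⟨⟨h.1 u, hu.1.1.trans_lt hv.1.2⟩, hv.1.1.trans_lt hu.1.2, h.1 v⟩

theorem card_stabSet_le (h : IsSIRep G d a b L)
    (hsep : ∀ u v, u ≠ v → L u = ∅ → b u ≤ a v ∨ b v ≤ a u) (x : ℝ) :
    #(stabSet a b x) ≤ d * cliqueNumber G - 1 + 1 := by
  classical
  by_cases hx : ∃ u ∈ stabSet a b x, L u = ∅
  · obtain ⟨u, hu, hLu⟩ := hx
    have hsingle : stabSet a b x ⊆ {u} := by
      intro v hv
      rw [mem_singleton]
      by_contra hvu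
      rw [mem_stabSet] at hu hv
      rcases hsep u v (Ne.symm hvu) hLu with huv | hvu <;> linarith [hu.1, hu.2, hv.1, hv.2]
    have := (card_le_card hsingle).trans (card_singleton u).le
    omega
  · push Not at hx
    have hcover : stabSet a b x ⊆ univ.biUnion fun ℓ => (stabSet a b x).filter (ℓ ∈ L ·) := by
      intro v hv
      obtain ⟨ℓ, hℓ⟩ := hx v hv
      exact mem_biUnion.2 ⟨ℓ, mem_univ _, mem_filter.2 ⟨hv, hℓ⟩⟩
    have : #(stabSet a b x) ≤ d * cliqueNumber G :=
      calc #(stabSet a b x)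
          ≤ ∑ ℓ, #((stabSet a b x).filter (ℓ ∈ L ·)) :=
            (card_le_card hcover).trans card_biUnion_le
        _ ≤ ∑ _ℓ : Fin d, cliqueNumber G :=
            sum_le_sum fun ℓ _ => card_le_cliqueNumber (h.isClique_stabSet_filter_mem x ℓ)
        _ = d * cliqueNumber G := by simp
    omega

/-- Unlabelled vertices are isolated, so they may be moved to the pairwise disjoint intervals
`(M + k, M + k + 1)` to the right of all others, with `k` an enumeration of `V`. -/
theorem exists_separated (h : IsSIRep G d a b L) :
    ∃ a' b', IsSIRep G d a' b' L ∧ ∀ u v, u ≠ v → L u = ∅ → b' u ≤ a' v ∨ b' v ≤ a' u := by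
  obtain ⟨M, hM⟩ := (Set.finite_range b).bddAbove
  have hbM : ∀ v, b v ≤ M := fun v => hM ⟨v, rfl⟩
  let k : V → ℕ := fun v => Fintype.equivFin V v
  have hk : Function.Injective k := Fin.val_injective.comp (Fintype.equivFin V).injective
  refine ⟨fun v => if L v = ∅ then M + k v else a v,
    fun v => if L v = ∅ then M + k v + 1 else b v, ⟨fun v => ?_, fun u v huv => ?_⟩, ?_⟩
  · dsimp only
    split_ifs
    · linarith
    · exact h.1 v
  · by_cases hlab : L u = ∅ ∨ L v = ∅
    · rw [h.2 u v huv]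
      rcases hlab with hl | hl <;> simp [hl]
    · obtain ⟨hu, hv⟩ := not_or.1 hlab
      simpa [hu, hv] using h.2 u v huv
  · intro u v huv hu
    simp only [hu, if_true]
    split_ifs with hv
    · rcases lt_or_gt_of_ne (hk.ne huv) with hlt | hlt
      · left
        have : (k u : ℝ) + 1 ≤ k v := by exact_mod_cast hlt
        linarith
      · right
        have : (k v : ℝ) + 1 ≤ k u := by exact_mod_cast hlt
        linarith
    · right
      have : (0 : ℝ) ≤ k u := Nat.cast_nonneg _
      linarith [hbM v]

end IsSIRep

/-- All intervals are `(0, 1)`, and each vertex is labelled by the edges at it. -/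
theorem exists_isSIRep {V : Type*} [Fintype V] (G : SimpleGraph V) :
    ∃ d a b L, IsSIRep G d a b L := by
  classical
  let e := Fintype.equivFin (Sym2 V)
  refine ⟨_, fun _ => 0, fun _ => 1,
    fun v => univ.filter fun i => v ∈ e.symm i ∧ e.symm i ∈ G.edgeSet, fun _ => one_pos,
    fun u v huv => ?_⟩
  have hmid : (Set.Ioo (0 : ℝ) 1 ∩ Set.Ioo 0 1).Nonempty := by norm_num
  simp only [hmid, true_and, Finset.Nonempty, mem_inter, mem_filter, mem_univ]
  constructor
  · intro hadj
    exact ⟨e s(u, v), by simpa using hadj, by simpa using hadj⟩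
  · rintro ⟨i, ⟨hu, hi⟩, hv, -⟩
    rwa [(Sym2.mem_and_mem_iff huv).1 ⟨hu, hv⟩, SimpleGraph.mem_edgeSet] at hi

/-- Every graph satisfies `pw(G) ≤ si(G)·ω(G) − 1`. -/
theorem pathwidth_le_si_mul_cliqueNumber {V : Type*} [Fintype V]
    (G : SimpleGraph V) :
    pathwidth G ≤ si G * cliqueNumber G - 1 := by
  obtain ⟨a, b, L, hrep⟩ := Nat.sInf_mem (exists_isSIRep G)
  obtain ⟨a', b', hrep', hsep⟩ := hrep.exists_separated
  exact pathwidth_le_of_card_stabSet_le G a' b' hrep'.1 (fun _ _ => hrep'.lt_of_adj) _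
    (hrep'.card_stabSet_le hsep)
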